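/- Let k₁,k₂>0, K≥2, J(z)=k₁/z¹²−k₂/z⁶ for z>0 and +∞ for z≤0, and let γ:=(2k₁/k₂)^{1/6}·((Σ_{j=1}^K j^{-12})/(Σ_{j=1}^K j^{-6}))^{1/6}. Define c_j:=−j·J'(jγ)/J'(γ) for j=2,…,K. Then J'(γ)<0, c_j>0 for every j=2,…,K, and Σ_{j=2}^K c_j=1. -/

import Mathlib

open Filter Finset Set

noncomputable section

/-- The classical Lennard-Jones potential on `(0,∞)` (real-valued formula). -/
def LJr (k₁ k₂ : ℝ) (z : ℝ) : ℝ := k₁ / z ^ 12 - k₂ / z ^ 6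

/-- The unique minimizer `γ` of the Cauchy–Born energy density `J_CB(z)=Σ_{j=1}^K J(jz)`. -/
def gammaLJ (k₁ k₂ : ℝ) (K : ℕ) : ℝ :=
  (2 * k₁ / k₂) ^ ((1 : ℝ) / 6) *
    ((∑ j ∈ Finset.Icc 1 K, 1 / (j : ℝ) ^ 12) /
      (∑ j ∈ Finset.Icc 1 K, 1 / (j : ℝ) ^ 6)) ^ ((1 : ℝ) / 6)

/-- The splitting coefficients `c_j := -j·J'(jγ)/J'(γ)`, `j = 2,…,K`. -/
def cLJ (k₁ k₂ : ℝ) (K : ℕ) (j : ℕ) : ℝ :=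
  -((j : ℝ) * deriv (LJr k₁ k₂) ((j : ℝ) * gammaLJ k₁ k₂ K)) /
    deriv (LJr k₁ k₂) (gammaLJ k₁ k₂ K)


/-! `J'(z) = 6(k₂z⁶ - 2k₁)/z¹³` changes sign only at `z = (2k₁/k₂)^{1/6}`. Writing `Sₚ = Σ_{j=1}^K j^{-p}`,
`γ⁶ = (2k₁/k₂)·S₁₂/S₆` with `S₁₂ < S₆`, so `J'(γ) < 0`, while `(jγ)⁶ ≥ 64γ⁶` and `64 S₁₂ ≥ 64 > 2 ≥ S₆`
give `J'(jγ) > 0` for `j ≥ 2`. Finally `γ` is a critical point of `J_CB`, i.e.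
`Σ_{j=1}^K j J'(jγ) = 0`; isolating the term `j = 1` is exactly `Σ_{j=2}^K c_j = 1`. -/

namespace LennardJones

def invPowSum (K p : ℕ) : ℝ := ∑ j ∈ Finset.Icc 1 K, 1 / (j : ℝ) ^ p

lemma invPowSum_nonneg (K p : ℕ) : 0 ≤ invPowSum K p :=
  Finset.sum_nonneg fun _ _ => by positivity

lemma one_le_invPowSum {K : ℕ} (hK : 1 ≤ K) (p : ℕ) : 1 ≤ invPowSum K p := by
  have h := Finset.single_le_sum (f := fun j : ℕ => 1 / (j : ℝ) ^ p) (fun _ _ => by positivity)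
    (Finset.mem_Icc.mpr ⟨le_rfl, hK⟩)
  simpa [invPowSum] using h

lemma invPowSum_lt_invPowSum {K p q : ℕ} (hK : 2 ≤ K) (hpq : p < q) :
    invPowSum K q < invPowSum K p := by
  refine Finset.sum_lt_sum (fun j hj => ?_) ⟨2, Finset.mem_Icc.mpr ⟨by norm_num, hK⟩, ?_⟩
  · have hj : (1 : ℝ) ≤ j := by exact_mod_cast (Finset.mem_Icc.mp hj).1
    gcongr
  · push_cast
    gcongr
    norm_num

lemma invPowSum_le_two (K : ℕ) {p : ℕ} (hp : 2 ≤ p) : invPowSum K p ≤ 2 := by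
  have hIcc : Finset.Icc 1 K = Finset.Ioo 0 (K + 1) := by
    ext; simp only [Finset.mem_Icc, Finset.mem_Ioo]; omega
  calc invPowSum K p ≤ ∑ j ∈ Finset.Ioo 0 (K + 1), ((j : ℝ) ^ 2)⁻¹ := by
        rw [invPowSum, hIcc]
        refine Finset.sum_le_sum fun j hj => ?_
        have hj : (1 : ℝ) ≤ j := by exact_mod_cast (Finset.mem_Ioo.mp hj).1
        rw [one_div]
        gcongr
    _ ≤ 2 / ((0 : ℕ) + 1) := sum_Ioo_inv_sq_le 0 (K + 1)
    _ = 2 := by norm_num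

lemma gammaLJ_eq (k₁ k₂ : ℝ) (K : ℕ) :
    gammaLJ k₁ k₂ K =
      (2 * k₁ / k₂) ^ ((1 : ℝ) / 6) * (invPowSum K 12 / invPowSum K 6) ^ ((1 : ℝ) / 6) :=
  rfl

lemma gammaLJ_pos {k₁ k₂ : ℝ} (hk₁ : 0 < k₁) (hk₂ : 0 < k₂) {K : ℕ} (hK : 1 ≤ K) :
    0 < gammaLJ k₁ k₂ K := by
  have := one_le_invPowSum hK 6
  have := one_le_invPowSum hK 12
  rw [gammaLJ_eq]
  positivity

lemma gammaLJ_pow_six {k₁ k₂ : ℝ} (hk : 0 ≤ k₁ / k₂) (K : ℕ) :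
    gammaLJ k₁ k₂ K ^ 6 = 2 * k₁ / k₂ * (invPowSum K 12 / invPowSum K 6) := by
  have hk' : 0 ≤ 2 * k₁ / k₂ := by rw [mul_div_assoc]; positivity
  have hS := div_nonneg (invPowSum_nonneg K 12) (invPowSum_nonneg K 6)
  rw [gammaLJ_eq, mul_pow, ← Real.rpow_natCast, ← Real.rpow_natCast, ← Real.rpow_mul hk',
    ← Real.rpow_mul hS]
  norm_num

lemma gammaLJ_critical {k₁ k₂ : ℝ} (hk₁ : 0 < k₁) (hk₂ : 0 < k₂) {K : ℕ} (hK : 1 ≤ K) :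
    k₂ * gammaLJ k₁ k₂ K ^ 6 * invPowSum K 6 = 2 * k₁ * invPowSum K 12 := by
  have := one_le_invPowSum hK 6
  rw [gammaLJ_pow_six (by positivity)]
  field_simp

lemma deriv_LJr (k₁ k₂ : ℝ) {z : ℝ} (hz : z ≠ 0) :
    deriv (LJr k₁ k₂) z = 6 * (k₂ * z ^ 6 - 2 * k₁) / z ^ 13 := by
  have h12 := (hasDerivAt_const z k₁).div (hasDerivAt_pow 12 z) (pow_ne_zero 12 hz)
  have h6 := (hasDerivAt_const z k₂).div (hasDerivAt_pow 6 z) (pow_ne_zero 6 hz)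
  rw [show LJr k₁ k₂ = ((fun _ => k₁) / fun x => x ^ 12) - (fun _ => k₂) / fun x => x ^ 6 from rfl,
    (h12.sub h6).deriv]
  field_simp
  ring

lemma deriv_LJr_neg_iff (k₁ k₂ : ℝ) {z : ℝ} (hz : 0 < z) :
    deriv (LJr k₁ k₂) z < 0 ↔ k₂ * z ^ 6 < 2 * k₁ := by
  rw [deriv_LJr k₁ k₂ hz.ne', div_lt_iff₀ (by positivity), zero_mul]
  constructor <;> intro h <;> linarith

lemma deriv_LJr_pos_iff (k₁ k₂ : ℝ) {z : ℝ} (hz : 0 < z) :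
    0 < deriv (LJr k₁ k₂) z ↔ 2 * k₁ < k₂ * z ^ 6 := by
  rw [deriv_LJr k₁ k₂ hz.ne', div_pos_iff_of_pos_right (by positivity)]
  constructor <;> intro h <;> linarith

/-- `Σ_{j=1}^K j J'(jz) = J_CB'(z)`. -/
lemma sum_mul_deriv_LJr (k₁ k₂ : ℝ) (K : ℕ) {z : ℝ} (hz : z ≠ 0) :
    ∑ j ∈ Finset.Icc 1 K, (j : ℝ) * deriv (LJr k₁ k₂) (j * z) =
      6 * (k₂ * z ^ 6 * invPowSum K 6 - 2 * k₁ * invPowSum K 12) / z ^ 13 := by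
  have hterm : ∀ j ∈ Finset.Icc 1 K, (j : ℝ) * deriv (LJr k₁ k₂) (j * z) =
      6 * (k₂ * z ^ 6 * (1 / (j : ℝ) ^ 6) - 2 * k₁ * (1 / (j : ℝ) ^ 12)) / z ^ 13 := by
    intro j hj
    have hj : (j : ℝ) ≠ 0 := by have := (Finset.mem_Icc.mp hj).1; positivity
    rw [deriv_LJr k₁ k₂ (mul_ne_zero hj hz)]
    field_simp
  rw [Finset.sum_congr rfl hterm, ← Finset.sum_div, ← Finset.mul_sum, Finset.sum_sub_distrib,
    ← Finset.mul_sum, ← Finset.mul_sum]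
  rfl

lemma sum_mul_deriv_LJr_gammaLJ {k₁ k₂ : ℝ} (hk₁ : 0 < k₁) (hk₂ : 0 < k₂) {K : ℕ} (hK : 1 ≤ K) :
    ∑ j ∈ Finset.Icc 1 K, (j : ℝ) * deriv (LJr k₁ k₂) (j * gammaLJ k₁ k₂ K) = 0 := by
  rw [sum_mul_deriv_LJr k₁ k₂ K (gammaLJ_pos hk₁ hk₂ hK).ne', gammaLJ_critical hk₁ hk₂ hK,
    sub_self, mul_zero, zero_div]

lemma deriv_LJr_gammaLJ_neg {k₁ k₂ : ℝ} (hk₁ : 0 < k₁) (hk₂ : 0 < k₂) {K : ℕ} (hK : 2 ≤ K) :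
    deriv (LJr k₁ k₂) (gammaLJ k₁ k₂ K) < 0 := by
  rw [deriv_LJr_neg_iff k₁ k₂ (gammaLJ_pos hk₁ hk₂ (by omega))]
  have hcrit := gammaLJ_critical hk₁ hk₂ (K := K) (by omega)
  have hS₆ := one_le_invPowSum (K := K) (by omega) 6
  nlinarith [invPowSum_lt_invPowSum hK (show 6 < 12 by norm_num)]

lemma deriv_LJr_mul_gammaLJ_pos {k₁ k₂ : ℝ} (hk₁ : 0 < k₁) (hk₂ : 0 < k₂) {K : ℕ} (hK : 1 ≤ K)
    {t : ℝ} (ht : 2 ≤ t) : 0 < deriv (LJr k₁ k₂) (t * gammaLJ k₁ k₂ K) := by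
  have hγ := gammaLJ_pos hk₁ hk₂ hK
  rw [deriv_LJr_pos_iff k₁ k₂ (by positivity)]
  have hS₆ : 0 < invPowSum K 6 := one_pos.trans_le (one_le_invPowSum hK 6)
  have hS₁₂ := one_le_invPowSum hK 12
  refine lt_of_mul_lt_mul_right ?_ hS₆.le
  calc 2 * k₁ * invPowSum K 6 ≤ 2 * k₁ * 2 := by gcongr; exact invPowSum_le_two K (by norm_num)
    _ < 2 * k₁ * (2 ^ 6 * invPowSum K 12) := by nlinarith
    _ ≤ 2 * k₁ * (t ^ 6 * invPowSum K 12) := by gcongr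
    _ = k₂ * (t * gammaLJ k₁ k₂ K) ^ 6 * invPowSum K 6 := by
      rw [mul_pow]; linear_combination t ^ 6 * (gammaLJ_critical hk₁ hk₂ hK).symm

lemma sum_Icc_two_neg_div_eq_one {f : ℕ → ℝ} {K : ℕ} (hK : 1 ≤ K)
    (hsum : ∑ j ∈ Finset.Icc 1 K, f j = 0) (hf : f 1 ≠ 0) :
    ∑ j ∈ Finset.Icc 2 K, -f j / f 1 = 1 := by
  have hIcc : Finset.Icc 1 K = insert 1 (Finset.Icc 2 K) := by
    ext; simp only [Finset.mem_Icc, Finset.mem_insert]; omega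
  rw [hIcc, Finset.sum_insert (by simp)] at hsum
  rw [← Finset.sum_div, Finset.sum_neg_distrib, eq_neg_of_add_eq_zero_right hsum, neg_neg,
    div_self hf]

end LennardJones

open LennardJones in
theorem splitting_coefficients (k₁ k₂ : ℝ) (hk₁ : 0 < k₁) (hk₂ : 0 < k₂)
    (K : ℕ) (hK : 2 ≤ K) :
    deriv (LJr k₁ k₂) (gammaLJ k₁ k₂ K) < 0 ∧
    (∀ j ∈ Finset.Icc 2 K, 0 < cLJ k₁ k₂ K j) ∧
    ∑ j ∈ Finset.Icc 2 K, cLJ k₁ k₂ K j = 1 := by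
  have hJ'γ := deriv_LJr_gammaLJ_neg hk₁ hk₂ hK
  refine ⟨hJ'γ, fun j hj => ?_, ?_⟩
  · have hj : (2 : ℝ) ≤ j := by exact_mod_cast (Finset.mem_Icc.mp hj).1
    have hJ'jγ := deriv_LJr_mul_gammaLJ_pos hk₁ hk₂ (K := K) (by omega) hj
    exact div_pos_of_neg_of_neg (neg_neg_of_pos (mul_pos (by positivity) hJ'jγ)) hJ'γ
  · have hsum := sum_mul_deriv_LJr_gammaLJ hk₁ hk₂ (K := K) (by omega)
    simpa [cLJ] using sum_Icc_two_neg_div_eq_one (by omega) hsum (by simpa using hJ'γ.ne)
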